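/- (Composition formula) If ψ(x) = e^{⊙x} M_ψ and φ(x) = e^{⊙x} M_φ are formal power series maps F^n → F^n with zero constant terms, then the matrix of the composition ψ∘φ is M_{ψ∘φ} = e^{⊙ M_φ} M_ψ, where e^{⊙A} = Σ_{i=0}^∞ A^{⊙i}/i! and the product on the right is the ordinary (block) matrix product. -/

import Mathlib

/-! Multi-index matrices and their symmetric product (Bekbaev). -/

/-- Multi-indices: `n`-tuples of nonnegative integers. -/
abbrev MultiIndex (n : ℕ) := Fin n →₀ ℕ

namespace SymProd

variable {n : ℕ} {R : Type*} [CommRing R]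

/-- `|α| = α₁ + ⋯ + αₙ`. -/
def deg (α : MultiIndex n) : ℕ := α.sum fun _ v => v

/-- `α! = α₁! ⋯ αₙ!`. -/
def mfact (α : MultiIndex n) : ℕ := α.prod fun _ v => v.factorial

/-- The multinomial coefficient `C(α,β) = α!/(β!(α−β)!) = ∏ᵢ C(αᵢ,βᵢ)`. -/
def mchoose (α β : MultiIndex n) : ℕ := ∏ i ∈ α.support ∪ β.support, (α i).choose (β i)

/-- A "matrix" indexed by pairs of multi-indices (row index first). A matrix in
`M(p',p;R)` is such a function supported on rows of degree `p'` and columns of degree `p`. -/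
abbrev Mat (n : ℕ) (R : Type*) := MultiIndex n → MultiIndex n → R

/-- `A` belongs to `M(p',p;R)`: supported on rows `α'` with `|α'| = p'` and columns `α`
with `|α| = p`. -/
def IsHom (p' p : ℕ) (A : Mat n R) : Prop :=
  ∀ α' α, A α' α ≠ 0 → deg α' = p' ∧ deg α = p

/-- The symmetric product
`(A ⊙ B)^{α'}_α = ∑_{β' ≪ α', β ≪ α} C(α,β) A^{β'}_β B^{α'−β'}_{α−β}`.
For `A ∈ M(p',p;R)` and `B ∈ M(q',q;R)` this agrees with Bekbaev's Definition 1
(the degree restrictions on `β, β'` hold automatically on the support of `A`). -/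
noncomputable def odot (A B : Mat n R) : Mat n R := fun α' α =>
  ∑ β' ∈ Finset.Iic α', ∑ β ∈ Finset.Iic α,
    (mchoose α β : R) * A β' β * B (α' - β') (α - β)

/-- The identity element `1 ∈ Mat(R)`: the `(0,0)` block is `1`. -/
def matOne : Mat n R := fun α' α => if α' = 0 ∧ α = 0 then 1 else 0

/-- `A^{⊙m}`, the `m`-th symmetric power. -/
noncomputable def sympow (A : Mat n R) : ℕ → Mat n R
  | 0 => matOne
  | m + 1 => odot (sympow A m) A

/-- The row vector `h = (h₁,…,hₙ) ∈ M(0,1;R)` attached to `h : Fin n → R`. -/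
noncomputable def rowVec (h : Fin n → R) : Mat n R := fun α' α =>
  if α' = 0 then ∑ j : Fin n, (if α = Finsupp.single j 1 then h j else 0) else 0

/-- Multi-indices of degree `w` (a finite set). -/
noncomputable def degSet (n w : ℕ) : Finset (MultiIndex n) :=
  (Finset.Iic (Finsupp.equivFunOnFinite.symm fun _ : Fin n => w)).filter fun β => deg β = w

/-- Ordinary matrix product of `v ∈ M(0,w;R)` with `A ∈ M(p',w;R)`, contracting the
weight-`w` index (the columns of `A`, via transposition): the result, in `M(0,p';R)`,
has entries `(v·A)^{α'}_α = ∑_{|β| = w} v^{α'}_β A^{α}_β`. -/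
noncomputable def vecMul (w : ℕ) (v A : Mat n R) : Mat n R := fun α' α =>
  ∑ β ∈ degSet n w, v α' β * A α β

end SymProd

namespace SymProd

variable {n : ℕ} {F : Type*} [Field F]

/-- The constant multi-index `(d,…,d)`. -/
noncomputable def constM (n d : ℕ) : MultiIndex n := Finsupp.equivFunOnFinite.symm fun _ => d

/-- Composition: substitution of the `n`-tuple `φ` (each with zero constant term) into the
multivariate power series `f`, i.e. `f(φ(x))`; the coefficient of `x^α` only receives
contributions from monomials `x^β` of `f` with `|β| ≤ |α|`. -/
noncomputable def mvComp (φ : Fin n → MvPowerSeries (Fin n) F)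
    (f : MvPowerSeries (Fin n) F) : MvPowerSeries (Fin n) F := fun α =>
  ∑ β ∈ Finset.Iic (constM n (deg α)),
    MvPowerSeries.coeff β f * MvPowerSeries.coeff α (∏ j : Fin n, φ j ^ β j)

/-- `m`-fold compositional iterate `φ^{∘m}` of a power series map, `φ^{∘0} = id`. -/
noncomputable def mvIter (φ : Fin n → MvPowerSeries (Fin n) F) :
    ℕ → Fin n → MvPowerSeries (Fin n) F
  | 0 => fun j => MvPowerSeries.X j
  | m + 1 => fun j => mvComp φ (mvIter φ m j)

/-- The matrix `M_φ ∈ Mat(F)` of a power series map `φ : Fⁿ → Fⁿ`: supported on the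
column blocks `p = 1`, with `(M_φ)^{α'}_{e_j} = ` the coefficient of `x^{α'}` in `φ_j`
(from the expansion `φ(x) = ∑_i (x^{⊙i}/i!) M^i_1`). -/
noncomputable def matOf (φ : Fin n → MvPowerSeries (Fin n) F) : Mat n F := fun α' α =>
  ∑ j : Fin n, if α = Finsupp.single j 1 then MvPowerSeries.coeff α' (φ j) else 0

/-- Ordinary (block) matrix product on `Mat(F)`; the contraction is truncated to
column-degrees `≤ deg α'`, which is the full product whenever the left factor `A`
satisfies `A α' β = 0` for `deg β > deg α'` (as is the case for `e^{⊙M_φ}` with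
`φ(0) = 0`). -/
noncomputable def matMul (A B : Mat n F) : Mat n F := fun α' α =>
  ∑ β ∈ Finset.Iic (constM n (deg α')), A α' β * B β α

/-- `E_1`: identity in the `(1,1)` block, zero elsewhere. -/
def E1 : Mat n F := fun α' α => if α' = α ∧ deg α = 1 then 1 else 0

/-- `E_∞`: the (infinite) identity matrix of `Mat(F)`. -/
def Einf : Mat n F := fun α' α => if α' = α then 1 else 0

/-- Powers with respect to ordinary matrix multiplication. -/
noncomputable def matPow (A : Mat n F) : ℕ → Mat n F
  | 0 => Einf
  | m + 1 => matMul A (matPow A m)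

/-- `e^{⊙A} = ∑_i A^{⊙i}/i!`; the sum is truncated blockwise at `i = deg α'`, which is
the full sum whenever `A^{⊙i}` has vanishing `(deg α', ·)` blocks for `i > deg α'`
(as is the case for `A = M_φ` with `M_φ(0,1) = 0`). -/
noncomputable def expOdot (A : Mat n F) : Mat n F := fun α' α =>
  ∑ i ∈ Finset.range (deg α' + 1), (i.factorial : F)⁻¹ * sympow A i α' α

end SymProd

/-! For `|α| = m`, the `α`-column of `M_φ^{⊙m}` lists the coefficients of `m! · φ^α`, where
`φ^α = ∏ⱼ φⱼ^{αⱼ}`, and it vanishes for `|α| ≠ m`: ⊙-multiplying by `M_φ` appends one factor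
`φⱼ` to `φ^{α - eⱼ}` with weight `C(α, α - eⱼ) = αⱼ`, and `∑ⱼ αⱼ = m + 1`. Hence the
`α`-column of `e^{⊙M_φ}` is the coefficient vector of `φ^α`. Since `φ(0) = 0`, `φ^α` has
order `≥ |α|`, so truncating the exponential series at `i = |α'|` loses nothing. Multiplying by
`M_ψ` pairs these columns with the coefficients of `ψⱼ`, which is exactly the coefficient
formula for `ψⱼ ∘ φ`. -/
open Finset in
theorem Finset.sum_antidiagonal_eq_sum_Iic {A M : Type*} [AddCommMonoid M]
    [AddCommMonoid A] [PartialOrder A] [CanonicallyOrderedAdd A] [Sub A] [OrderedSub A]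
    [AddLeftReflectLE A] [LocallyFiniteOrderBot A] [HasAntidiagonal A]
    (f : A → A → M) (a : A) :
    ∑ p ∈ antidiagonal a, f p.1 p.2 = ∑ b ∈ Iic a, f b (a - b) := by
  refine sum_nbij' Prod.fst (fun b => (b, a - b)) ?_ ?_ ?_ (fun _ _ => rfl) ?_ <;>
    simp only [HasAntidiagonal.mem_antidiagonal, mem_Iic]
  · exact fun p hp => hp ▸ le_self_add
  · exact fun b hb => add_tsub_cancel_of_le hb
  · rintro p rfl; rw [add_tsub_cancel_left]
  · rintro p rfl; rw [add_tsub_cancel_left]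

theorem MvPowerSeries.coeff_mul_eq_sum_Iic {σ R : Type*} [DecidableEq σ] [CommSemiring R]
    (f g : MvPowerSeries σ R) (α : σ →₀ ℕ) :
    coeff α (f * g) = ∑ β ∈ Finset.Iic α, coeff β f * coeff (α - β) g := by
  rw [coeff_mul, Finset.sum_antidiagonal_eq_sum_Iic (fun β γ => coeff β f * coeff γ g)]

theorem MvPowerSeries.coeff_prod_pow_eq_zero_of_degree_lt {σ ι R : Type*} [Fintype ι]
    [CommSemiring R] {φ : ι → MvPowerSeries σ R} (hφ : ∀ j, constantCoeff (φ j) = 0)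
    {α : σ →₀ ℕ} {β : ι →₀ ℕ} (h : α.degree < β.degree) :
    coeff α (∏ j, φ j ^ β j) = 0 := by
  apply coeff_of_lt_order
  calc (α.degree : ℕ∞) < β.degree := by exact_mod_cast h
    _ = ∑ j, ((β j : ℕ) : ℕ∞) := by rw [Finsupp.degree_eq_sum]; push_cast; rfl
    _ ≤ ∑ j, (φ j ^ β j).order :=
      Finset.sum_le_sum fun j _ => le_order_pow_of_constantCoeff_eq_zero _ (hφ j)
    _ ≤ (∏ j, φ j ^ β j).order := le_order_prod _ _

open Finset in
theorem Fintype.prod_pow_eq_prod_pow_tsub_single_mul {ι M : Type*} [Fintype ι] [DecidableEq ι]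
    [CommMonoid M] (f : ι → M) {α : ι →₀ ℕ} {j : ι} (h : α j ≠ 0) :
    ∏ i, f i ^ α i = (∏ i, f i ^ (α - Finsupp.single j 1 : ι →₀ ℕ) i) * f j := by
  conv_lhs =>
    rw [← tsub_add_cancel_of_le (Finsupp.single_le_iff.mpr (Nat.one_le_iff_ne_zero.mpr h))]
  simp only [Finsupp.add_apply, pow_add, prod_mul_distrib, Finsupp.single_apply, pow_ite,
    pow_one, pow_zero, prod_ite_eq]

namespace SymProd

open MvPowerSeries Finset

variable {n : ℕ} {F : Type*} [Field F]

theorem deg_eq_degree (α : MultiIndex n) : deg α = α.degree := rfl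

theorem deg_eq_sum (α : MultiIndex n) : deg α = ∑ i, α i := Finsupp.degree_eq_sum α

theorem deg_tsub_single_add_one {α : MultiIndex n} {j : Fin n} (h : α j ≠ 0) :
    deg (α - Finsupp.single j 1) + 1 = deg α := by
  have hle := Finsupp.single_le_iff.mpr (Nat.one_le_iff_ne_zero.mpr h)
  have := map_add Finsupp.degree (α - Finsupp.single j 1) (Finsupp.single j 1)
  rw [tsub_add_cancel_of_le hle, Finsupp.degree_single] at this
  exact this.symm

theorem mchoose_tsub_single {α : MultiIndex n} {j : Fin n} (h : α j ≠ 0) :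
    mchoose α (α - Finsupp.single j 1) = α j := by
  unfold mchoose
  rw [prod_eq_single j]
  · simp [Nat.choose_symm (Nat.one_le_iff_ne_zero.mpr h)]
  · intro i _ hij
    simp [Ne.symm hij]
  · simp [h]

theorem coeff_mvComp (φ : Fin n → MvPowerSeries (Fin n) F) (f : MvPowerSeries (Fin n) F)
    (α : MultiIndex n) :
    coeff α (mvComp φ f) =
      ∑ β ∈ Iic (constM n (deg α)), coeff β f * coeff α (∏ j, φ j ^ β j) := rfl

theorem odot_matOf_apply (S : Mat n F) (φ : Fin n → MvPowerSeries (Fin n) F)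
    (α' α : MultiIndex n) :
    odot S (matOf φ) α' α = ∑ j, (α j : F) *
      ∑ β' ∈ Iic α', S β' (α - Finsupp.single j 1) * coeff (α' - β') (φ j) := by
  have hcol : ∀ j β', ∑ β ∈ Iic α, (mchoose α β : F) * S β' β *
        (if α - β = Finsupp.single j 1 then coeff (α' - β') (φ j) else 0) =
      (α j : F) * (S β' (α - Finsupp.single j 1) * coeff (α' - β') (φ j)) := by
    intro j β'
    rcases eq_or_ne (α j) 0 with hj | hj
    · refine (sum_eq_zero fun β _ => ?_).trans (by simp [hj])
      rw [if_neg, mul_zero]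
      intro h
      simpa [hj] using DFunLike.congr_fun h j
    rw [sum_eq_single (α - Finsupp.single j 1)]
    · rw [tsub_tsub_cancel_of_le (Finsupp.single_le_iff.mpr (Nat.one_le_iff_ne_zero.mpr hj)),
        if_pos rfl, mchoose_tsub_single hj]
      ring
    · intro β hβ hne
      rw [if_neg, mul_zero]
      intro h
      exact hne (by rw [← h, tsub_tsub_cancel_of_le (mem_Iic.mp hβ)])
    · exact fun h => absurd (mem_Iic.mpr tsub_le_self) h
  simp only [odot, matOf, mul_sum]
  rw [sum_congr rfl fun β' _ => sum_comm, sum_comm]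
  refine sum_congr rfl fun j _ => sum_congr rfl fun β' _ => hcol j β'

theorem sympow_matOf_apply (φ : Fin n → MvPowerSeries (Fin n) F) (m : ℕ) (α' α : MultiIndex n) :
    sympow (matOf φ) m α' α =
      if deg α = m then (m.factorial : F) * coeff α' (∏ j, φ j ^ α j) else 0 := by
  induction m generalizing α' α with
  | zero =>
    by_cases hα : α = 0 <;>
      simp [sympow, matOne, hα, deg_eq_degree, Finsupp.degree_eq_zero_iff, coeff_one]
  | succ m ih =>
    have hterm : ∀ j, (α j : F) * ∑ β' ∈ Iic α',
          sympow (matOf φ) m β' (α - Finsupp.single j 1) * coeff (α' - β') (φ j) =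
        (α j : F) * if deg α = m + 1 then
          (m.factorial : F) * coeff α' (∏ j, φ j ^ α j) else 0 := by
      intro j
      rcases eq_or_ne (α j) 0 with hj | hj
      · simp [hj]
      simp_rw [ih, ← deg_tsub_single_add_one hj, Nat.add_right_cancel_iff]
      split_ifs
      · rw [Fintype.prod_pow_eq_prod_pow_tsub_single_mul _ hj, coeff_mul_eq_sum_Iic, mul_sum, mul_sum,
          mul_sum]
        exact sum_congr rfl fun _ _ => by ring
      · simp
    rw [sympow, odot_matOf_apply, sum_congr rfl fun j _ => hterm j, ← sum_mul, ← Nat.cast_sum,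
      ← deg_eq_sum]
    split_ifs with h
    · rw [h, Nat.factorial_succ]; push_cast; ring
    · simp

theorem expOdot_matOf [CharZero F] {φ : Fin n → MvPowerSeries (Fin n) F}
    (hφ : ∀ j, constantCoeff (φ j) = 0) (α' β : MultiIndex n) :
    expOdot (matOf φ) α' β = coeff α' (∏ j, φ j ^ β j) := by
  have hterm : ∀ i, (i.factorial : F)⁻¹ * sympow (matOf φ) i α' β =
      if deg β = i then coeff α' (∏ j, φ j ^ β j) else 0 := by
    intro i
    rw [sympow_matOf_apply]
    split_ifs
    · rw [inv_mul_cancel_left₀ (by exact_mod_cast i.factorial_ne_zero)]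
    · rw [mul_zero]
  simp only [expOdot, hterm, sum_ite_eq, mem_range, Nat.lt_succ_iff]
  split_ifs with h
  · rfl
  · exact (coeff_prod_pow_eq_zero_of_degree_lt hφ (not_le.mp h)).symm

end SymProd

open SymProd MvPowerSeries in
theorem matOf_comp_general {n : ℕ} (F : Type*) [Field F] [CharZero F]
    (φ ψ : Fin n → MvPowerSeries (Fin n) F)
    (hφ : ∀ j, constantCoeff (φ j) = 0) :
    matOf (fun j => mvComp φ (ψ j)) = matMul (expOdot (matOf φ)) (matOf ψ) := by
  funext α' α
  simp only [matOf, matMul, coeff_mvComp, expOdot_matOf hφ, Finset.mul_sum, mul_ite, mul_zero]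
  rw [Finset.sum_comm]
  refine Finset.sum_congr rfl fun j _ => ?_
  split_ifs <;> simp [mul_comm]

open SymProd MvPowerSeries in
/-- composition formula: for power series maps `φ, ψ : Fⁿ → Fⁿ` with zero
constant terms, the matrix of the composition `ψ∘φ` is `M_{ψ∘φ} = e^{⊙M_φ} M_ψ`. -/
theorem matOf_comp {n : ℕ} (F : Type*) [Field F] [CharZero F]
    (φ ψ : Fin n → MvPowerSeries (Fin n) F)
    (hφ : ∀ j, constantCoeff (φ j) = 0)
    (hψ : ∀ j, constantCoeff (ψ j) = 0) :
    matOf (fun j => mvComp φ (ψ j)) = matMul (expOdot (matOf φ)) (matOf ψ) :=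
  matOf_comp_general F φ ψ hφ
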